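/- arXiv:1801.08491 — 2 statements merged into one kernel-verified Lean document; each statement's English description precedes it below -/
import Mathlib

section
/- Let 𝒳 and 𝒴 be complex Euclidean spaces and let X be an operator on 𝒴⊗𝒳. Then X is positive semidefinite with Tr_𝒴(X) = 1_𝒳 if and only if there exists a completely positive unital linear map Ψ from L(𝒴) to L(𝒳) such that X = (Id_{L(𝒴)} ⊗ Ψ)(vec(1_𝒴) vec(1_𝒴)*). -/
open Matrix
open scoped ComplexOrder Kronecker

noncomputable section

/-- The outer product `u u*` of a vector, as a matrix. -/
def outerM {ι : Type} (u : ι → ℂ) : Matrix ι ι ℂ :=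
  Matrix.of fun p q => u p * star (u q)

/-- Partial trace over the first tensor factor. -/
def ptraceLeft {ι κ : Type} [Fintype ι] (M : Matrix (ι × κ) (ι × κ) ℂ) : Matrix κ κ ℂ :=
  Matrix.of fun a b => ∑ i, M (i, a) (i, b)
/-- Application of a map to the blocks of a matrix corresponding to the first tensor
factor; for a linear map `T` this is exactly `(T ⊗ Id)(M)`. -/
def blockApplyR {α β γ : Type} (T : Matrix α α ℂ → Matrix β β ℂ)
    (M : Matrix (α × γ) (α × γ) ℂ) : Matrix (β × γ) (β × γ) ℂ :=
  Matrix.of fun p q => T (Matrix.of fun a b => M (a, p.2) (b, q.2)) p.1 q.1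

/-- Application of a map to the blocks of a matrix corresponding to the second tensor
factor; for a linear map `T` this is exactly `(Id ⊗ T)(M)`. -/
def blockApplyL {α β γ : Type} (T : Matrix α α ℂ → Matrix β β ℂ)
    (M : Matrix (γ × α) (γ × α) ℂ) : Matrix (γ × β) (γ × β) ℂ :=
  Matrix.of fun p q => T (Matrix.of fun a b => M (p.1, a) (q.1, b)) p.2 q.2

/-- Complete positivity of a superoperator: all of its amplifications `Φ ⊗ Id` map
positive semidefinite matrices to positive semidefinite matrices. -/
def IsCP {κ ι : Type} [Fintype κ] [Fintype ι]
    (Φ : Matrix κ κ ℂ →ₗ[ℂ] Matrix ι ι ℂ) : Prop :=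
  ∀ (d : ℕ) (M : Matrix (κ × Fin d) (κ × Fin d) ℂ),
    M.PosSemidef → (blockApplyR (fun N => Φ N) M).PosSemidef

/-- Trace preservation of a superoperator. -/
def IsTP {κ ι : Type} [Fintype κ] [Fintype ι]
    (Φ : Matrix κ κ ℂ →ₗ[ℂ] Matrix ι ι ℂ) : Prop :=
  ∀ M, (Φ M).trace = M.trace

/-- A channel is a completely positive trace-preserving linear map. -/
def IsChannel {κ ι : Type} [Fintype κ] [Fintype ι]
    (Φ : Matrix κ κ ℂ →ₗ[ℂ] Matrix ι ι ℂ) : Prop :=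
  IsCP Φ ∧ IsTP Φ

/-- Unitality of a superoperator. -/
def IsUnital {κ ι : Type} [Fintype κ] [Fintype ι] [DecidableEq κ] [DecidableEq ι]
    (Φ : Matrix κ κ ℂ →ₗ[ℂ] Matrix ι ι ℂ) : Prop :=
  Φ 1 = 1

/-- The Choi representation `J(Φ) = ∑ Φ(E_{ab}) ⊗ E_{ab}` of a superoperator. -/
def choiM {κ ι : Type} [DecidableEq κ]
    (Φ : Matrix κ κ ℂ →ₗ[ℂ] Matrix ι ι ℂ) : Matrix (ι × κ) (ι × κ) ℂ :=
  Matrix.of fun p q => Φ (Matrix.single p.2 q.2 1) p.1 q.1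

/-- The vectorization `vec(1)` of the identity: the (non-normalized) maximally
entangled vector. -/
def vecOne (ι : Type) [DecidableEq ι] : ι × ι → ℂ :=
  fun p => if p.1 = p.2 then 1 else 0

/-!
Given `M ⪰ 0` with `Tr_𝒴 M = 1`, the map `Ψ_M(A) = ∑_{a,b} A_{ab} M_{(a,·),(b,·)}` has `M` as its
Choi matrix and `Ψ_M(1) = Tr_𝒴 M = 1`; it is completely positive because `(Ψ_M ⊗ Id)(N)` is the
compression `V* (M ⊗ N) V` of a Kronecker product of positive semidefinite matrices.
Conversely `(Id ⊗ Ψ)(vec(1) vec(1)*)` is positive semidefinite by complete positivity, and its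
partial trace is `Ψ(Tr_𝒴 (vec(1) vec(1)*)) = Ψ(1) = 1`.
-/

lemma outerM_posSemidef {α : Type} [Fintype α] (u : α → ℂ) : (outerM u).PosSemidef := by
  have h : outerM u = replicateCol Unit u * (replicateCol Unit u)ᴴ := by
    ext p q
    simp [outerM, mul_apply]
  rw [h]
  exact posSemidef_self_mul_conjTranspose _

section vecOne

variable {κ : Type} [DecidableEq κ]

lemma block_outerM_vecOne (a b : κ) :
    (of fun x y => outerM (vecOne κ) (a, x) (b, y)) = single a b 1 := by
  ext x y
  by_cases hx : a = x <;> by_cases hy : b = y <;> simp [outerM, vecOne, single, hx, hy]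

lemma ptraceLeft_outerM_vecOne [Fintype κ] : ptraceLeft (outerM (vecOne κ)) = 1 := by
  ext a b
  by_cases h : a = b <;> simp [ptraceLeft, outerM, vecOne, one_apply, h, eq_comm]

lemma blockApplyL_outerM_vecOne {ι : Type} (Ψ : Matrix κ κ ℂ → Matrix ι ι ℂ) :
    blockApplyL Ψ (outerM (vecOne κ)) = of fun p q => Ψ (single p.1 q.1 1) p.2 q.2 := by
  ext p q
  simp only [blockApplyL, block_outerM_vecOne]

end vecOne

lemma ptraceLeft_blockApplyL {α β γ : Type} [Fintype γ] (Ψ : Matrix α α ℂ →ₗ[ℂ] Matrix β β ℂ)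
    (X : Matrix (γ × α) (γ × α) ℂ) :
    ptraceLeft (blockApplyL (fun N => Ψ N) X) = Ψ (ptraceLeft X) := by
  have hsum : ptraceLeft X = ∑ i, of fun a b => X (i, a) (i, b) := by
    ext a b
    simp [ptraceLeft, Matrix.sum_apply]
  ext p q
  rw [hsum, map_sum, Matrix.sum_apply]
  rfl

lemma IsCP.posSemidef_blockApplyL {α β γ : Type} [Fintype α] [Fintype β] [Fintype γ]
    {Ψ : Matrix α α ℂ →ₗ[ℂ] Matrix β β ℂ} (hΨ : IsCP Ψ) {X : Matrix (γ × α) (γ × α) ℂ}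
    (hX : X.PosSemidef) : (blockApplyL (fun N => Ψ N) X).PosSemidef := by
  let e := Fintype.equivFin γ
  have h := hΨ _ _ (hX.submatrix fun p : α × Fin (Fintype.card γ) => (e.symm p.2, p.1))
  convert h.submatrix fun p : γ × β => (p.2, e p.1) using 1
  ext p q
  simp [blockApplyL, blockApplyR, e]

def superopOfChoi {κ ι : Type} [Fintype κ] (M : Matrix (κ × ι) (κ × ι) ℂ) :
    Matrix κ κ ℂ →ₗ[ℂ] Matrix ι ι ℂ where
  toFun A := of fun p q => ∑ a, ∑ b, A a b * M (a, p) (b, q)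
  map_add' A B := by
    ext p q
    simp [add_mul, Finset.sum_add_distrib]
  map_smul' c A := by
    ext p q
    simp [Finset.mul_sum, mul_assoc]

def diagEmbed (κ ι γ : Type) [DecidableEq κ] [DecidableEq ι] [DecidableEq γ] :
    Matrix ((κ × ι) × (κ × γ)) (ι × γ) ℂ :=
  of fun x y => if x.1.1 = x.2.1 ∧ x.1.2 = y.1 ∧ x.2.2 = y.2 then 1 else 0

section superopOfChoi

variable {κ ι : Type} [Fintype κ] [DecidableEq κ] (M : Matrix (κ × ι) (κ × ι) ℂ)

lemma superopOfChoi_one : superopOfChoi M 1 = ptraceLeft M := by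
  ext p q
  simp [superopOfChoi, ptraceLeft, one_apply]

lemma blockApplyL_superopOfChoi :
    blockApplyL (fun A => superopOfChoi M A) (outerM (vecOne κ)) = M := by
  ext ⟨a, p⟩ ⟨b, q⟩
  simp [blockApplyL_outerM_vecOne, superopOfChoi, single_apply, ite_and, Finset.sum_ite_eq]

lemma blockApplyR_superopOfChoi {γ : Type} [Fintype ι] [Fintype γ] [DecidableEq ι]
    [DecidableEq γ] (N : Matrix (κ × γ) (κ × γ) ℂ) :
    blockApplyR (fun A => superopOfChoi M A) N =
      (diagEmbed κ ι γ)ᴴ * (M ⊗ₖ N) * diagEmbed κ ι γ := by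
  ext ⟨p, i⟩ ⟨q, j⟩
  simp only [blockApplyR, superopOfChoi, LinearMap.coe_mk, AddHom.coe_mk, of_apply, diagEmbed,
    ite_and, mul_apply, conjTranspose_apply, RCLike.star_def, apply_ite (starRingEnd ℂ), map_one,
    map_zero, kroneckerMap_apply, ite_mul, one_mul, zero_mul, Fintype.sum_prod_type,
    Finset.sum_ite_irrel, Finset.sum_ite_eq', Finset.mem_univ, ↓reduceIte, Finset.sum_const_zero,
    Finset.sum_ite_eq, mul_ite, mul_one, mul_zero]
  rw [Finset.sum_comm]
  exact Finset.sum_congr rfl fun _ _ => Finset.sum_congr rfl fun _ _ => mul_comm _ _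

end superopOfChoi

lemma superopOfChoi_isCP {κ ι : Type} [Fintype κ] [Fintype ι] {M : Matrix (κ × ι) (κ × ι) ℂ}
    (hM : M.PosSemidef) : IsCP (superopOfChoi M) := by
  classical
  intro d N hN
  rw [blockApplyR_superopOfChoi]
  exact (hM.kronecker hN).conjTranspose_mul_mul_same _

theorem choi_unital_characterization
    (ι κ : Type) [Fintype ι] [Fintype κ] [DecidableEq ι] [DecidableEq κ]
    (M : Matrix (κ × ι) (κ × ι) ℂ) :
    (M.PosSemidef ∧ ptraceLeft M = 1) ↔
      ∃ Ψ : Matrix κ κ ℂ →ₗ[ℂ] Matrix ι ι ℂ,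
        IsCP Ψ ∧ IsUnital Ψ ∧ M = blockApplyL (fun N => Ψ N) (outerM (vecOne κ)) := by
  constructor
  · rintro ⟨hM, hTr⟩
    exact ⟨superopOfChoi M, superopOfChoi_isCP hM, by rw [IsUnital, superopOfChoi_one, hTr],
      (blockApplyL_superopOfChoi M).symm⟩
  · rintro ⟨Ψ, hCP, hU, rfl⟩
    exact ⟨hCP.posSemidef_blockApplyL (outerM_posSemidef _),
      by rw [ptraceLeft_blockApplyL, ptraceLeft_outerM_vecOne, hU]⟩
end
end

section
/- Let n be a positive integer, let 𝒳₁,…,𝒳ₙ, 𝒴₁,…,𝒴ₙ, and 𝒵₀,…,𝒵ₙ be complex Euclidean spaces with dim(𝒵_{k−1}⊗𝒳_k) = dim(𝒵_k⊗𝒴_k) for all k, let U_k be invertible isometries from 𝒵_{k−1}⊗𝒳_k to 𝒴_k⊗𝒵_k, and let w ∈ 𝒵ₙ be a unit vector. Define V = (1_{𝒳ₙ⊗⋯⊗𝒳₂} ⊗ U₁ᵀ) ⋯ (Uₙᵀ ⊗ 1_{𝒴_{n−1}⊗⋯⊗𝒴₁}), an invertible isometry from 𝒵ₙ⊗𝒴ₙ⊗⋯⊗𝒴₁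 to 𝒵₀⊗𝒳ₙ⊗⋯⊗𝒳₁, and define the channel Θₙ from L(𝒴ₙ⊗⋯⊗𝒴₁) to L(𝒳ₙ⊗⋯⊗𝒳₁) by Θₙ(Z) = Tr_{𝒵₀}(V (w w* ⊗ Z) V*). Then J(Θₙ) ∈ Sₙ(𝒴ₙ,…,𝒴₁;𝒳ₙ,…,𝒳₁). -/
open Matrix
open scoped ComplexOrder Kronecker

noncomputable section

/-- Index type for operators on `𝒴₁ ⊗ ⋯ ⊗ 𝒴ₙ ⊗ 𝒳₁ ⊗ ⋯ ⊗ 𝒳ₙ`. -/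
abbrev StratIdx (X Y : ℕ → Type) (n : ℕ) : Type :=
  ((i : Fin n) → Y i) × ((i : Fin n) → X i)

/-- The set `Sₙ(𝒳₁,…,𝒳ₙ;𝒴₁,…,𝒴ₙ)` of `n`-turn strategy operators, defined recursively. -/
def IsStrategy (X Y : ℕ → Type) [∀ i, Fintype (X i)] [∀ i, Fintype (Y i)]
    [∀ i, DecidableEq (X i)] [∀ i, DecidableEq (Y i)] :
    (n : ℕ) → Matrix (StratIdx X Y n) (StratIdx X Y n) ℂ → Prop
  | 0, M => M = 1
  | n + 1, M =>
      M.PosSemidef ∧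
      ∃ N : Matrix (StratIdx X Y n) (StratIdx X Y n) ℂ,
        IsStrategy X Y n N ∧
        ∀ (y y' : (i : Fin n) → Y i) (x x' : (i : Fin (n + 1)) → X i),
          ∑ b : Y n, M (Fin.snoc y b, x) (Fin.snoc y' b, x')
            = N (y, Fin.init x) (y', Fin.init x')
              * (if x (Fin.last n) = x' (Fin.last n) then 1 else 0)

/-- Reversal of the tensor factors of a (dependent) tuple. -/
def revFun {Z : ℕ → Type} {n : ℕ} (f : (i : Fin n) → Z i) : (i : Fin n) → Z (n - 1 - i) :=
  fun i => f ⟨n - 1 - ↑i, by have := i.isLt; omega⟩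

/-- The vector `W u`, where `W` reverses the order of all tensor factors of
`𝒴₁ ⊗ ⋯ ⊗ 𝒴ₙ ⊗ 𝒳₁ ⊗ ⋯ ⊗ 𝒳ₙ`. -/
def wVec {X Y : ℕ → Type} {n : ℕ} [∀ i, Fintype (X i)] [∀ i, Fintype (Y i)]
    [∀ i, DecidableEq (X i)] [∀ i, DecidableEq (Y i)]
    (u : StratIdx X Y n → ℂ) :
    StratIdx (fun i => Y (n - 1 - i)) (fun i => X (n - 1 - i)) n → ℂ :=
  fun p => ∑ q : StratIdx X Y n, if p = (revFun q.2, revFun q.1) then u q else 0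


/-- Index type for `𝒴₁ ⊗ ⋯ ⊗ 𝒴ₖ`. -/
abbrev YPart (Y : ℕ → Type) (n k : ℕ) : Type := (i : {j : Fin n // (j : ℕ) < k}) → Y i.1

/-- Index type for `𝒳_{k+1} ⊗ ⋯ ⊗ 𝒳ₙ`. -/
abbrev XPart (X : ℕ → Type) (n k : ℕ) : Type := (i : {j : Fin n // k ≤ (j : ℕ)}) → X i.1

/-- Index type for `𝒴₁ ⊗ ⋯ ⊗ 𝒴ₖ ⊗ 𝒵ₖ ⊗ 𝒳_{k+1} ⊗ ⋯ ⊗ 𝒳ₙ`, the state space after the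
first `k` turns of a strategy. -/
abbrev SpIdx (X Y Z : ℕ → Type) (n k : ℕ) : Type := YPart Y n k × Z k × XPart X n k

section Stine

variable {X Y Z : ℕ → Type} [∀ i, Fintype (X i)] [∀ i, Fintype (Y i)] [∀ i, Fintype (Z i)]
  [∀ i, DecidableEq (X i)] [∀ i, DecidableEq (Y i)] [∀ i, DecidableEq (Z i)] {n : ℕ}

/-- The amplification `1_{𝒴₁⊗⋯⊗𝒴ₖ} ⊗ U_{k+1} ⊗ 1_{𝒳_{k+2}⊗⋯⊗𝒳ₙ}` of the isometry `U_{k+1}`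
(tensor factors implicitly reordered). -/
def ampU (U : (k : Fin n) → Matrix (Y k × Z (k + 1)) (Z k × X k) ℂ) (k : Fin n) :
    Matrix (SpIdx X Y Z n (k + 1)) (SpIdx X Y Z n k) ℂ :=
  Matrix.of fun p q =>
    (if (∀ i : {j : Fin n // (j : ℕ) < (k : ℕ)}, p.1 ⟨i.1, Nat.lt_succ_of_lt i.2⟩ = q.1 i)
        ∧ (∀ i : {j : Fin n // (k : ℕ) + 1 ≤ (j : ℕ)}, p.2.2 i = q.2.2 ⟨i.1, Nat.le_of_succ_le i.2⟩)
      then (1 : ℂ) else 0)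
    * U k (p.1 ⟨k, Nat.lt_succ_self _⟩, p.2.1) (q.2.1, q.2.2 ⟨k, Nat.le_refl _⟩)

/-- The ordered product `(1 ⊗ U_k)(1 ⊗ U_{k-1} ⊗ 1) ⋯ (U₁ ⊗ 1)`. -/
def prodU (U : (k : Fin n) → Matrix (Y k × Z (k + 1)) (Z k × X k) ℂ) :
    (k : ℕ) → k ≤ n → Matrix (SpIdx X Y Z n k) (SpIdx X Y Z n 0) ℂ
  | 0, _ => 1
  | k + 1, h => ampU U ⟨k, h⟩ * prodU U k (Nat.le_of_succ_le h)

def toYPart (y : (i : Fin n) → Y i) : YPart Y n n := fun i => y i.1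
def toXPart (x : (i : Fin n) → X i) : XPart X n 0 := fun i => x i.1
def emptyYPart : YPart Y n 0 := fun i => absurd i.2 (Nat.not_lt_zero _)
def emptyXPart : XPart X n n := fun i => absurd i.1.isLt (Nat.not_lt.mpr i.2)
def ofXPart (x : XPart X n 0) : (i : Fin n) → X i := fun i => x ⟨i, Nat.zero_le _⟩
def ofYPart (y : YPart Y n n) : (i : Fin n) → Y i := fun i => y ⟨i, i.isLt⟩

/-- The channel `Ξₙ(M) = Tr_{𝒵ₙ}(U (vv* ⊗ M) U*)`, where
`U = (1_{𝒴₁⊗⋯⊗𝒴_{n-1}} ⊗ Uₙ) ⋯ (U₁ ⊗ 1_{𝒳₂⊗⋯⊗𝒳ₙ})`. -/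
def stineOut (U : (k : Fin n) → Matrix (Y k × Z (k + 1)) (Z k × X k) ℂ) (v : Z 0 → ℂ)
    (M : Matrix ((i : Fin n) → X i) ((i : Fin n) → X i) ℂ) :
    Matrix ((i : Fin n) → Y i) ((i : Fin n) → Y i) ℂ :=
  Matrix.of fun y y' => ∑ zn : Z n,
    (prodU U n (Nat.le_refl n)
      * (Matrix.of fun p q : SpIdx X Y Z n 0 =>
          v p.2.1 * star (v q.2.1) * M (ofXPart p.2.2) (ofXPart q.2.2))
      * (prodU U n (Nat.le_refl n))ᴴ)
      (toYPart y, zn, emptyXPart) (toYPart y', zn, emptyXPart)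

/-- The Choi representation `J(Ξₙ)` of the channel `Ξₙ` above. -/
def stineChoi (U : (k : Fin n) → Matrix (Y k × Z (k + 1)) (Z k × X k) ℂ) (v : Z 0 → ℂ) :
    Matrix (StratIdx X Y n) (StratIdx X Y n) ℂ :=
  Matrix.of fun p q => stineOut U v (Matrix.single p.2 q.2 1) p.1 q.1

end Stine


section RevU

variable {X Y Z : ℕ → Type} [∀ i, Fintype (X i)] [∀ i, Fintype (Y i)] [∀ i, Fintype (Z i)]
  [∀ i, DecidableEq (X i)] [∀ i, DecidableEq (Y i)] [∀ i, DecidableEq (Z i)] {n : ℕ}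

/-- The transposed isometries `U_{n-k}ᵀ`, reindexed (with tensor factors implicitly
reordered) so that they constitute the steps of the time-reversed strategy, whose
turn-`k` input space is `𝒴_{n-k}`, output space is `𝒳_{n-k}`, and memory spaces are
`𝒵_{n-k}` and `𝒵_{n-k-1}`. -/
def revU (U : (k : Fin n) → Matrix (Y k × Z (k + 1)) (Z k × X k) ℂ) :
    (k : Fin n) → Matrix (X (n - 1 - k) × Z (n - (k + 1))) (Z (n - k) × Y (n - 1 - k)) ℂ :=
  fun k => Matrix.of fun p q =>
    U ⟨n - 1 - k, by have := k.isLt; omega⟩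
      (q.2, cast (congrArg Z (by have := k.isLt; omega : n - (k : ℕ) = (n - 1 - k) + 1)) q.1)
      (cast (congrArg Z (by omega : n - ((k : ℕ) + 1) = n - 1 - k)) p.2, p.1)

end RevU


/-!
On classical input `x` and output `y`, the dilation `U (vv* ⊗ M) Uᴴ` leaves the memory `𝒵ₙ` in the
unnormalised state `ψ(y, x) = Uₙ(yₙ, xₙ) ⋯ U₁(y₁, x₁) v`, where `U_k(b, a) : 𝒵_{k-1} → 𝒵_k` is the
block `⟨b| U_k |a⟩`. Hence the Choi matrix is the Gram matrix
`J((y, x), (y', x')) = ⟨ψ(y', x'), ψ(y, x)⟩`, which is positive semidefinite, and summing over the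
last output `yₙ` contracts `Uₙ` against `Uₙᴴ`, so the isometry condition `Uₙᴴ Uₙ = 1` turns `J_n`
into `J_{n-1} ⊗ 1`. By induction every such dilation by isometries is a strategy. The reversed
dilation is built from the transposes `U_kᵀ`, which are isometries because the `U_k` are unitary.
-/

theorem Matrix.transpose_conjTranspose_mul_transpose {ι κ R : Type*} [Fintype κ] [CommSemiring R]
    [StarRing R] (A : Matrix ι κ R) : Aᵀᴴ * Aᵀ = (A * Aᴴ)ᵀ := by
  rw [transpose_mul, transpose_conjTranspose, conjTranspose_transpose]

theorem Matrix.mulVec_dotProduct_star_mulVec {ι κ R : Type*} [Fintype ι] [Fintype κ]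
    [DecidableEq κ] [CommSemiring R] [StarRing R] {A : Matrix ι κ R} (hA : Aᴴ * A = 1)
    (g g' : κ → R) : (A *ᵥ g) ⬝ᵥ star (A *ᵥ g') = g ⬝ᵥ star g' := by
  rw [dotProduct_comm, star_mulVec, ← dotProduct_mulVec, mulVec_mulVec, hA, one_mulVec,
    dotProduct_comm]

section Dilation

variable {X Y Z : ℕ → Type} {n : ℕ}

def memoryAmplitude [∀ i, Fintype (Z i)] :
    (k : ℕ) → ((j : Fin k) → Matrix (Y j × Z (j + 1)) (Z j × X j) ℂ) →
      (Z 0 → ℂ) → ((j : Fin k) → Y j) → ((j : Fin k) → X j) → Z k → ℂ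
  | 0, _, v, _, _ => v
  | k + 1, U, v, y, x => fun ζ => ∑ z, U (Fin.last k) (y (Fin.last k), ζ) (z, x (Fin.last k)) *
      memoryAmplitude k (fun j => U j.castSucc) v (Fin.init y) (Fin.init x) z

theorem memoryAmplitude_succ_snoc [∀ i, Fintype (X i)] [∀ i, Fintype (Z i)]
    [∀ i, DecidableEq (X i)] (U : (k : Fin (n + 1)) → Matrix (Y k × Z (k + 1)) (Z k × X k) ℂ)
    (v : Z 0 → ℂ) (y : (i : Fin n) → Y i) (b : Y n) (x : (i : Fin (n + 1)) → X i)
    (ζ : Z (n + 1)) :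
    memoryAmplitude (n + 1) U v (Fin.snoc y b) x ζ =
      (U (Fin.last n) *ᵥ fun c => if c.2 = x (Fin.last n) then
        memoryAmplitude n (fun k => U k.castSucc) v y (Fin.init x) c.1 else 0) (b, ζ) := by
  simp only [memoryAmplitude, Fin.snoc_last, Fin.init_snoc, mulVec, dotProduct,
    Fintype.sum_prod_type, mul_ite, mul_zero, Finset.sum_ite_eq', Finset.mem_univ, if_true]

def inputVec [∀ i, DecidableEq (X i)] (v : Z 0 → ℂ) (x : (i : Fin n) → X i) :
    SpIdx X Y Z n 0 → ℂ :=
  fun s => v s.2.1 * if ofXPart s.2.2 = x then 1 else 0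

theorem of_mul_single_eq_vecMulVec_inputVec [∀ i, DecidableEq (X i)] (v : Z 0 → ℂ)
    (a b : (i : Fin n) → X i) :
    (Matrix.of fun s t : SpIdx X Y Z n 0 =>
        v s.2.1 * star (v t.2.1) * Matrix.single a b 1 (ofXPart s.2.2) (ofXPart t.2.2))
      = vecMulVec (inputVec v a) (star (inputVec v b)) := by
  ext s t
  simp only [Matrix.of_apply, Matrix.single_apply, vecMulVec_apply, inputVec, Pi.star_apply,
    star_mul', eq_comm (a := a), eq_comm (a := b)]
  split_ifs <;> simp_all

/-- The deltas of `ampU` and of the induction hypothesis of `prodU_mulVec_inputVec` merge into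
deltas fixing `r.1` and `r.2.2`. -/
theorem ampU_mul_apply [∀ i, DecidableEq (X i)] [∀ i, DecidableEq (Y i)]
    (U : (k : Fin n) → Matrix (Y k × Z (k + 1)) (Z k × X k) ℂ) (k : Fin n)
    (F : YPart Y n k → Z k → ℂ) (x : (i : Fin n) → X i) (p : SpIdx X Y Z n (k + 1))
    (r : SpIdx X Y Z n k) :
    ampU U k p r *
        ((if ∀ j : {i : Fin n // (k : ℕ) ≤ i}, r.2.2 j = x j.1 then 1 else 0) * F r.1 r.2.1)
      = (if r.1 = fun i : {j : Fin n // (j : ℕ) < k} => p.1 ⟨i.1, Nat.lt_succ_of_lt i.2⟩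
          then 1 else 0) *
        ((if r.2.2 = fun j : {i : Fin n // (k : ℕ) ≤ i} => x j.1 then 1 else 0) *
          ((if ∀ j : {i : Fin n // (k : ℕ) + 1 ≤ i}, p.2.2 j = x j.1 then 1 else 0) *
            (U k (p.1 ⟨k, Nat.lt_succ_self _⟩, p.2.1) (r.2.1, x k) * F r.1 r.2.1))) := by
  obtain ⟨ry, rz, rx⟩ := r
  simp only [ampU, Matrix.of_apply]
  by_cases hy : ry = fun i : {j : Fin n // (j : ℕ) < k} => p.1 ⟨i.1, Nat.lt_succ_of_lt i.2⟩
  · by_cases hx : rx = fun j : {i : Fin n // (k : ℕ) ≤ i} => x j.1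
    · subst hy hx
      simp only [true_and, implies_true, if_true]
      ring
    · have hx' : ¬ ∀ j : {i : Fin n // (k : ℕ) ≤ i}, rx j = x j.1 := fun h => hx (funext h)
      simp only [hx, hx', if_false]
      ring
  · have hy' : ¬ ∀ i : {j : Fin n // (j : ℕ) < k}, p.1 ⟨i.1, Nat.lt_succ_of_lt i.2⟩ = ry i :=
      fun h => hy (funext fun i => (h i).symm)
    simp only [hy, hy', false_and, if_false]
    ring

theorem revU_conjTranspose_mul_self [∀ i, Fintype (X i)] [∀ i, Fintype (Z i)]
    [∀ i, DecidableEq (Y i)] [∀ i, DecidableEq (Z i)]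
    (U : (k : Fin n) → Matrix (Y k × Z (k + 1)) (Z k × X k) ℂ) (hU : ∀ k, U k * (U k)ᴴ = 1)
    (k : Fin n) : (revU U k)ᴴ * revU U k = 1 := by
  have hk := k.isLt
  let m : Fin n := ⟨n - 1 - k, by omega⟩
  let e₁ : X (n - 1 - k) × Z (n - (k + 1)) ≃ Z (n - 1 - k) × X (n - 1 - k) :=
    (Equiv.prodComm _ _).trans ((Equiv.cast (congrArg Z (by omega))).prodCongr (Equiv.refl _))
  let e₂ : Z (n - k) × Y (n - 1 - k) ≃ Y (n - 1 - k) × Z (n - 1 - k + 1) :=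
    (Equiv.prodComm _ _).trans ((Equiv.refl _).prodCongr (Equiv.cast (congrArg Z (by omega))))
  have hrev : revU U k = (U m)ᵀ.submatrix e₁ e₂ := rfl
  rw [hrev, conjTranspose_submatrix, submatrix_mul_equiv, transpose_conjTranspose_mul_transpose,
    hU, transpose_one, submatrix_one_equiv]

variable [∀ i, Fintype (X i)] [∀ i, Fintype (Y i)] [∀ i, Fintype (Z i)]
  [∀ i, DecidableEq (X i)] [∀ i, DecidableEq (Y i)] [∀ i, DecidableEq (Z i)]

theorem prodU_mulVec_inputVec (U : (k : Fin n) → Matrix (Y k × Z (k + 1)) (Z k × X k) ℂ)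
    (v : Z 0 → ℂ) (x : (i : Fin n) → X i) (k : ℕ) (hk : k ≤ n) (p : SpIdx X Y Z n k) :
    (prodU U k hk *ᵥ inputVec v x) p =
      (if ∀ j : {i : Fin n // k ≤ (i : ℕ)}, p.2.2 j = x j.1 then 1 else 0) *
        memoryAmplitude k (fun j => U (Fin.castLE hk j)) v
          (fun j => p.1 ⟨Fin.castLE hk j, j.isLt⟩) (fun j => x (Fin.castLE hk j)) p.2.1 := by
  induction k with
  | zero =>
    obtain ⟨py, z, px⟩ := p
    have hpx : ofXPart px = x ↔ ∀ j : {i : Fin n // 0 ≤ (i : ℕ)}, px j = x j.1 :=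
      ⟨fun h j => by rw [← h]; rfl, fun h => funext fun i => h ⟨i, Nat.zero_le _⟩⟩
    simp only [prodU, one_mulVec, inputVec, memoryAmplitude, hpx]
    ring
  | succ k ih =>
    have hk' := Nat.le_of_succ_le hk
    rw [prodU, ← mulVec_mulVec, mulVec]
    simp only [dotProduct, ih]
    rw [Finset.sum_congr rfl fun r _ => ampU_mul_apply U ⟨k, hk⟩
      (fun ry z => memoryAmplitude k (fun j => U (Fin.castLE hk' j)) v
        (fun j => ry ⟨Fin.castLE hk' j, j.isLt⟩) (fun j => x (Fin.castLE hk' j)) z) x p r]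
    simp only [Fintype.sum_prod_type, ite_mul, one_mul, zero_mul, Finset.sum_ite_irrel,
      Finset.sum_const_zero, Finset.sum_ite_eq', Finset.mem_univ, if_true]
    rfl

theorem prodU_mulVec_inputVec_apply_toYPart
    (U : (k : Fin n) → Matrix (Y k × Z (k + 1)) (Z k × X k) ℂ) (v : Z 0 → ℂ)
    (y : (i : Fin n) → Y i) (x : (i : Fin n) → X i) (z : Z n) :
    (prodU U n le_rfl *ᵥ inputVec v x) (toYPart y, z, emptyXPart) =
      memoryAmplitude n U v y x z := by
  rw [prodU_mulVec_inputVec, if_pos fun j => absurd j.1.isLt (Nat.not_lt.mpr j.2), one_mul]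
  rfl

theorem stineChoi_apply (U : (k : Fin n) → Matrix (Y k × Z (k + 1)) (Z k × X k) ℂ)
    (v : Z 0 → ℂ) (p q : StratIdx X Y n) :
    stineChoi U v p q =
      ∑ z, memoryAmplitude n U v p.1 p.2 z * star (memoryAmplitude n U v q.1 q.2 z) := by
  simp only [stineChoi, stineOut, Matrix.of_apply, of_mul_single_eq_vecMulVec_inputVec,
    mul_vecMulVec, vecMulVec_mul, ← star_mulVec, vecMulVec_apply, Pi.star_apply,
    prodU_mulVec_inputVec_apply_toYPart]

theorem stineChoi_posSemidef (U : (k : Fin n) → Matrix (Y k × Z (k + 1)) (Z k × X k) ℂ)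
    (v : Z 0 → ℂ) : (stineChoi U v).PosSemidef := by
  let A : Matrix (StratIdx X Y n) (Z n) ℂ := Matrix.of fun p z => memoryAmplitude n U v p.1 p.2 z
  have hGram : stineChoi U v = A * Aᴴ := by
    ext p q
    simp [A, stineChoi_apply, mul_apply]
  rw [hGram]
  exact posSemidef_self_mul_conjTranspose A

theorem sum_stineChoi_snoc (U : (k : Fin (n + 1)) → Matrix (Y k × Z (k + 1)) (Z k × X k) ℂ)
    (hU : (U (Fin.last n))ᴴ * U (Fin.last n) = 1) (v : Z 0 → ℂ)
    (y y' : (i : Fin n) → Y i) (x x' : (i : Fin (n + 1)) → X i) :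
    ∑ b, stineChoi U v (Fin.snoc y b, x) (Fin.snoc y' b, x')
      = stineChoi (fun k => U k.castSucc) v (y, Fin.init x) (y', Fin.init x')
        * (if x (Fin.last n) = x' (Fin.last n) then 1 else 0) := by
  set g : Z n × X n → ℂ := fun c => if c.2 = x (Fin.last n) then
    memoryAmplitude n (fun k => U k.castSucc) v y (Fin.init x) c.1 else 0
  set g' : Z n × X n → ℂ := fun c => if c.2 = x' (Fin.last n) then
    memoryAmplitude n (fun k => U k.castSucc) v y' (Fin.init x') c.1 else 0
  calc ∑ b, stineChoi U v (Fin.snoc y b, x) (Fin.snoc y' b, x')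
      = (U (Fin.last n) *ᵥ g) ⬝ᵥ star (U (Fin.last n) *ᵥ g') := by
        simp only [stineChoi_apply, memoryAmplitude_succ_snoc, dotProduct, Fintype.sum_prod_type]
        rfl
    _ = g ⬝ᵥ star g' := mulVec_dotProduct_star_mulVec hU g g'
    _ = _ := by
        simp only [g, g', dotProduct, Fintype.sum_prod_type, stineChoi_apply, Pi.star_apply,
          apply_ite star, star_zero, ite_mul, mul_ite, zero_mul, mul_zero, mul_one,
          Finset.sum_ite_eq', Finset.mem_univ, if_true, Finset.sum_ite_irrel,
          Finset.sum_const_zero, eq_comm (a := x' _)]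

theorem isStrategy_stineChoi (U : (k : Fin n) → Matrix (Y k × Z (k + 1)) (Z k × X k) ℂ)
    (hU : ∀ k, (U k)ᴴ * U k = 1) (v : Z 0 → ℂ) (hv : ∑ z, Complex.normSq (v z) = 1) :
    IsStrategy X Y n (stineChoi U v) := by
  induction n with
  | zero =>
    ext p q
    obtain rfl : p = q := Subsingleton.elim p q
    simp only [stineChoi_apply, memoryAmplitude, one_apply_eq, Complex.star_def,
      Complex.mul_conj, ← Complex.ofReal_sum, hv, Complex.ofReal_one]
  | succ n ih =>
    exact ⟨stineChoi_posSemidef U v, _, ih (fun k => U k.castSucc) (fun k => hU _),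
      sum_stineChoi_snoc U (hU _) v⟩

end Dilation

theorem reversed_stinespring_is_strategy_general
    (n : ℕ)
    (X Y Z : ℕ → Type) [∀ i, Fintype (X i)] [∀ i, Fintype (Y i)] [∀ i, Fintype (Z i)]
    [∀ i, DecidableEq (X i)] [∀ i, DecidableEq (Y i)] [∀ i, DecidableEq (Z i)]
    (U : (k : Fin n) → Matrix (Y k × Z (k + 1)) (Z k × X k) ℂ)
    (hU : ∀ k : Fin n, (U k)ᴴ * U k = 1 ∧ U k * (U k)ᴴ = 1)
    (w : Z n → ℂ) (hw : ∑ z, Complex.normSq (w z) = 1) :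
    IsStrategy (fun i => Y (n - 1 - i)) (fun i => X (n - 1 - i)) n
      (stineChoi (X := fun i => Y (n - 1 - i)) (Y := fun i => X (n - 1 - i))
        (Z := fun i => Z (n - i)) (revU U) w) :=
  isStrategy_stineChoi (X := fun i => Y (n - 1 - i)) (Y := fun i => X (n - 1 - i))
    (Z := fun i => Z (n - i)) (revU U) (revU_conjTranspose_mul_self U fun k => (hU k).2) w hw

theorem reversed_stinespring_is_strategy
    (n : ℕ) (hn : 0 < n)
    (X Y Z : ℕ → Type) [∀ i, Fintype (X i)] [∀ i, Fintype (Y i)] [∀ i, Fintype (Z i)]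
    [∀ i, DecidableEq (X i)] [∀ i, DecidableEq (Y i)] [∀ i, DecidableEq (Z i)]
    (hdim : ∀ k : Fin n, Fintype.card (Z k × X k) = Fintype.card (Y k × Z (k + 1)))
    (U : (k : Fin n) → Matrix (Y k × Z (k + 1)) (Z k × X k) ℂ)
    (hU : ∀ k : Fin n, (U k)ᴴ * U k = 1 ∧ U k * (U k)ᴴ = 1)
    (w : Z n → ℂ) (hw : ∑ z, Complex.normSq (w z) = 1) :
    IsStrategy (fun i => Y (n - 1 - i)) (fun i => X (n - 1 - i)) n
      (stineChoi (X := fun i => Y (n - 1 - i)) (Y := fun i => X (n - 1 - i))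
        (Z := fun i => Z (n - i)) (revU U) w) :=
  reversed_stinespring_is_strategy_general n X Y Z U hU w hw

end
end
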